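/- arXiv:2207.03278 — 6 statements merged into one kernel-verified Lean document; each statement's English description precedes it below -/
import Mathlib

section
/- Let V be a vector space, W ⊆ V a subspace, and C a complement of W in V. Then for each j, the space K_j = {φ ∈ Hom(Λ^j V, V) : φ(w, v_1,...,v_{j-1}) ∈ W for all w ∈ W, v_i ∈ V} is linearly isomorphic to (Λ^j V* ⊗ W) ⊕ (Λ^j C* ⊗ C). -/
/-!
Split `φ ∈ K_j` along `V = W ⊕ C` in its values: `φ = p_W ∘ φ + p_C ∘ φ`. The `W`-part is an
arbitrary alternating map into `W`. The `C`-part vanishes as soon as its first argument lies in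
`W`, hence, being alternating, as soon as any argument does; multilinearity then shows that it
only depends on the `C`-components of its arguments, i.e. it is determined by its restriction
to `C`, which can be any alternating map `Λ^j C → C`.
-/

variable {V : Type*} [AddCommGroup V] [Module ℝ V]

/-- `K j` as a submodule of the alternating maps `Λ^{j+1} V → V`: those sending
`(w, v₁, …, v_j)` with `w ∈ W` into `W`. -/
def tangentKSub (W : Submodule ℝ V) (j : ℕ) :
    Submodule ℝ (V [⋀^Fin (j + 1)]→ₗ[ℝ] V) where
  carrier := {φ | ∀ v : Fin (j + 1) → V, v 0 ∈ W → φ v ∈ W}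
  add_mem' := by
    intro a b ha hb v hv
    simpa using W.add_mem (ha v hv) (hb v hv)
  zero_mem' := by
    intro v hv
    simpa using W.zero_mem
  smul_mem' := by
    intro c a ha v hv
    simpa using W.smul_mem c (ha v hv)

namespace AlternatingMap

variable {R M N ι : Type*} [Ring R] [AddCommGroup M] [Module R M] [AddCommGroup N] [Module R N]
  {q : Submodule R M}

theorem map_eq_zero_of_mem {i₀ : ι} {f : M [⋀^ι]→ₗ[R] N} (hf : ∀ v, v i₀ ∈ q → f v = 0)
    {v : ι → M} {i : ι} (hv : v i ∈ q) : f v = 0 := by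
  classical
  obtain rfl | hi := eq_or_ne i i₀
  · exact hf v hv
  · have hswap : f (v ∘ Equiv.swap i₀ i) = 0 := hf _ (by simpa using hv)
    rwa [f.map_swap v hi.symm, neg_eq_zero] at hswap

theorem map_eq_of_forall_sub_mem [Fintype ι] {f : M [⋀^ι]→ₗ[R] N}
    (hf : ∀ v i, v i ∈ q → f v = 0) {u v : ι → M} (huv : ∀ i, u i - v i ∈ q) :
    f u = f v := by
  classical
  have hu : u = v + (u - v) := by abel
  rw [hu, f.map_add_univ, Finset.sum_eq_single Finset.univ, Finset.piecewise_univ]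
  · intro s _ hs
    obtain ⟨i, hi⟩ : ∃ i, i ∉ s := by simpa [Finset.eq_univ_iff_forall] using hs
    exact hf _ i (by simpa [Finset.piecewise_eq_of_notMem _ _ _ hi] using huv i)
  · simp

theorem compLinearMap_projection_of_map_eq_zero [Fintype ι] {p : Submodule R M}
    (hpq : IsCompl p q) {f : M [⋀^ι]→ₗ[R] N} (hf : ∀ v i, v i ∈ q → f v = 0) :
    f.compLinearMap (p.projection q hpq) = f :=
  ext fun v => map_eq_of_forall_sub_mem hf fun i => by
    rw [← neg_mem_iff, neg_sub, ← Submodule.projection_eq_self_sub_projection]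
    exact Submodule.projection_apply_mem hpq.symm _

end AlternatingMap

namespace tangentKSub

variable {W C : Submodule ℝ V} (hWC : IsCompl W C) (j : ℕ)

noncomputable def toProd :
    tangentKSub W j →ₗ[ℝ] (V [⋀^Fin (j + 1)]→ₗ[ℝ] W) × (C [⋀^Fin (j + 1)]→ₗ[ℝ] C) where
  toFun φ := ((W.projectionOnto C hWC).compAlternatingMap φ,
    ((C.projectionOnto W hWC.symm).compAlternatingMap φ).compLinearMap C.subtype)
  map_add' _ _ := by ext <;> simp
  map_smul' _ _ := by ext <;> simp

noncomputable def ofProd :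
    (V [⋀^Fin (j + 1)]→ₗ[ℝ] W) × (C [⋀^Fin (j + 1)]→ₗ[ℝ] C) →ₗ[ℝ] tangentKSub W j where
  toFun p := ⟨W.subtype.compAlternatingMap p.1 +
      (C.subtype.compAlternatingMap p.2).compLinearMap (C.projectionOnto W hWC.symm),
    fun v hv => by
      have hv' : p.2 (fun i => C.projectionOnto W hWC.symm (v i)) = 0 :=
        p.2.map_coord_zero 0 (Submodule.projectionOnto_apply_of_mem_right hWC.symm hv)
      simp [hv']⟩
  map_add' _ _ := by ext; simp [add_add_add_comm]
  map_smul' _ _ := by ext; simp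

theorem toProd_ofProd
    (p : (V [⋀^Fin (j + 1)]→ₗ[ℝ] W) × (C [⋀^Fin (j + 1)]→ₗ[ℝ] C)) :
    toProd hWC j (ofProd hWC j p) = p := by
  ext v <;> simp [toProd, ofProd]

theorem ofProd_toProd (φ : tangentKSub W j) : ofProd hWC j (toProd hWC j φ) = φ := by
  obtain ⟨φ, hφ⟩ := φ
  set ψ := (C.projection W hWC.symm).compAlternatingMap φ
  have hψ : ∀ v i, v i ∈ W → ψ v = 0 := fun v i hv =>
    AlternatingMap.map_eq_zero_of_mem (i₀ := 0) (fun u hu =>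
      Submodule.projection_apply_of_mem_right hWC.symm (hφ u hu)) hv
  have hψC : ψ.compLinearMap (C.projection W hWC.symm) = ψ :=
    AlternatingMap.compLinearMap_projection_of_map_eq_zero hWC.symm hψ
  ext v
  calc W.projection C hWC (φ v) + ψ (fun i => C.projection W hWC.symm (v i))
      = W.projection C hWC (φ v) + ψ v := by rw [← ψ.compLinearMap_apply, hψC]
    _ = φ v := Submodule.projection_add_projection_eq_self hWC _

end tangentKSub

/-- if `C` is a complement of `W` in `V`, then `K_j` is linearly isomorphic to
`(Λ^j V* ⊗ W) ⊕ (Λ^j C* ⊗ C)`, the latter encoded as alternating maps `Λ^j V → W` and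
`Λ^j C → C`. -/
theorem tangentK_equiv_prod
    (W C : Submodule ℝ V) (hcompl : IsCompl W C) (j : ℕ) :
    Nonempty ((tangentKSub W j) ≃ₗ[ℝ]
      (V [⋀^Fin (j + 1)]→ₗ[ℝ] W) × (C [⋀^Fin (j + 1)]→ₗ[ℝ] C)) :=
  ⟨.ofLinearMap (tangentKSub.toProd hcompl j) (tangentKSub.ofProd hcompl j)
    (LinearMap.ext (tangentKSub.toProd_ofProd hcompl j))
    (LinearMap.ext (tangentKSub.ofProd_toProd hcompl j))⟩
end

section
/- The Nijenhuis–Richardson bracket on Hom(Λ^• V, V), defined on decomposables by [φ₁⊗w₁, φ₂⊗w₂] = φ₁∧ι_{w₁}(φ₂) ⊗ w₂ − (−1)^{(k₁−1)(k₂−1)} φ₂∧ι_{w₂}(φ₁) ⊗ w₁ for φᵢ ∈ Λ^{kᵢ}V*, wᵢ ∈ V, restricts to the subspaces K_j = {φ : φ(W, Λ^{j-1}V) ⊆ W}: if ψ₁ ∈ K_{k₁} and ψ₂ ∈ K_{k₂} then [ψ₁, ψ₂] ∈ K_{k₁+k₂−1}. -/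
/-!
Each summand of `i_P Q (v)` is `± Q(P(v_{σ 1}, …), v_{σ …}, …)`. The vector `v₀ ∈ W` sits either
among the arguments of `P`, and then `P(…) ∈ W` is the first argument of `Q`, or among the remaining
arguments of `Q`. Since `P` and `Q` are alternating, an argument in `W` at any position is as good as
one in the first position, so every summand of `i_P Q` and of `i_Q P` lies in `W`.
-/

open Finset

variable {V : Type*} [AddCommGroup V] [Module ℝ V]

/-- The insertion operator `i_P Q` of the Nijenhuis–Richardson bracket, as a function:
the (normalized) alternatization of `(v₁,…) ↦ Q(P(v₁,…,v_{k+1}), v_{k+2},…)`. -/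
noncomputable def nrHook {k l : ℕ} (P : V [⋀^Fin (k + 1)]→ₗ[ℝ] V)
    (Q : V [⋀^Fin (l + 1)]→ₗ[ℝ] V) : (Fin (k + 1 + l) → V) → V :=
  fun v => (((Nat.factorial (k + 1)) * Nat.factorial l : ℝ))⁻¹ •
    ∑ σ : Equiv.Perm (Fin (k + 1 + l)),
      (Equiv.Perm.sign σ : ℤ) •
        Q (Fin.cons (P fun i : Fin (k + 1) => v (σ (Fin.castAdd l i)))
            fun j : Fin l => v (σ (Fin.natAdd (k + 1) j)))

/-- The Nijenhuis–Richardson bracket `[P, Q] = i_P Q − (−1)^{(k₁−1)(k₂−1)} i_Q P`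
of `P ∈ Hom(Λ^{k+1}V, V)` and `Q ∈ Hom(Λ^{l+1}V, V)`, as a function on `(k+l+1)`-tuples. -/
noncomputable def nrBracket {k l : ℕ} (P : V [⋀^Fin (k + 1)]→ₗ[ℝ] V)
    (Q : V [⋀^Fin (l + 1)]→ₗ[ℝ] V) : (Fin (k + 1 + l) → V) → V :=
  fun v => nrHook P Q v -
    ((-1 : ℤ) ^ (k * l)) • nrHook Q P (fun i : Fin (l + 1 + k) => v (Fin.cast (by omega) i))

theorem AlternatingMap.map_mem_of_apply_mem {R M N ι : Type*} [CommRing R] [AddCommGroup M]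
    [Module R M] [AddCommGroup N] [Module R N] [DecidableEq ι] (f : M [⋀^ι]→ₗ[R] N)
    (S : Set M) (T : Submodule R N) (i₀ : ι) (hf : ∀ v : ι → M, v i₀ ∈ S → f v ∈ T)
    (v : ι → M) (i : ι) (hv : v i ∈ S) : f v ∈ T := by
  rcases eq_or_ne i i₀ with rfl | hi
  · exact hf v hv
  · have hswap : f (v ∘ Equiv.swap i₀ i) ∈ T := hf _ (by simpa using hv)
    rw [f.map_swap v hi.symm] at hswap
    simpa using neg_mem hswap

theorem nrHook_mem (W : Submodule ℝ V) {k l : ℕ} (P : V [⋀^Fin (k + 1)]→ₗ[ℝ] V)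
    (Q : V [⋀^Fin (l + 1)]→ₗ[ℝ] V)
    (hP : ∀ v : Fin (k + 1) → V, v 0 ∈ W → P v ∈ W)
    (hQ : ∀ v : Fin (l + 1) → V, v 0 ∈ W → Q v ∈ W)
    (v : Fin (k + 1 + l) → V) (hv : v ⟨0, by positivity⟩ ∈ W) :
    nrHook P Q v ∈ W := by
  refine W.smul_mem _ (W.sum_mem fun σ _ => zsmul_mem ?_ _)
  obtain ⟨x, hσ⟩ : ∃ x, v (σ x) ∈ W := ⟨σ.symm _, by simpa using hv⟩
  induction x using Fin.addCases with
  | left i =>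
    have hPW := P.map_mem_of_apply_mem W W 0 hP (fun a => v (σ (Fin.castAdd l a))) i hσ
    exact hQ _ (by simpa using hPW)
  | right j =>
    exact Q.map_mem_of_apply_mem W W 0 hQ _ j.succ (by simpa using hσ)

/-- the Nijenhuis–Richardson bracket restricts to the subspaces
`K_j = {ψ : ψ(W, Λ^{j-1}V) ⊆ W}`: if `ψ₁ ∈ K_{k+1}` and `ψ₂ ∈ K_{l+1}`, then
`[ψ₁, ψ₂] ∈ K_{k+l+1}`. -/
theorem nrBracket_mem_tangentK (W : Submodule ℝ V) {k l : ℕ}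
    (ψ₁ : V [⋀^Fin (k + 1)]→ₗ[ℝ] V) (ψ₂ : V [⋀^Fin (l + 1)]→ₗ[ℝ] V)
    (h₁ : ∀ v : Fin (k + 1) → V, v 0 ∈ W → ψ₁ v ∈ W)
    (h₂ : ∀ v : Fin (l + 1) → V, v 0 ∈ W → ψ₂ v ∈ W) :
    ∀ v : Fin (k + 1 + l) → V, v ⟨0, by omega⟩ ∈ W → nrBracket ψ₁ ψ₂ v ∈ W := by
  intro v hv
  refine sub_mem (nrHook_mem W ψ₁ ψ₂ h₁ h₂ v hv) (zsmul_mem ?_ _)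
  exact nrHook_mem W ψ₂ ψ₁ h₂ h₁ _ (by simpa using hv)
end

section
/- The kernel of the map φ_1: End(V) → ℝ given by the trace equals sl(V), and for A, B ∈ End(V) with tr(A) = tr(B) = 0, the commutator [A,B] also has trace zero; more generally, for the partial trace maps φ_k, the Nijenhuis–Richardson bracket of elements of ker(φ_{k₁}) and ker(φ_{k₂}) lies in ker(φ_{k₁+k₂−1}). -/
/-!
Put `e_i` in the first argument of the insertion `i_P Q` and contract with `e^i`. Write each
permutation as a transposition moving `e_i` to some slot followed by a permutation `θ` of the
remaining arguments. If `e_i` lands in a slot of `Q`, the contraction is a partial trace of `Q`,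
which vanishes because `Q` is alternating and traceless in its first slot. If it lands in one of the
`k + 1` slots of `P`, alternation of `P` brings it back to the first slot, and every such slot gives
`sign θ • tr (v ↦ Q (P (v, …), …))`. So the partial trace of `i_P Q` is `(k! l!)⁻¹` times the
alternation of `tr (Q ∘ P)`, and that of `i_Q P` is the same with `P` and `Q` exchanged. Since
`tr (Q ∘ P) = tr (P ∘ Q)` and exchanging the two blocks of arguments costs `(-1)^(k l)`, the two
terms of the bracket cancel.
-/

open Finset

variable {V : Type*} [AddCommGroup V] [Module ℝ V]

open Equiv Equiv.Perm

namespace Fin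

lemma cons_comp_cast_castAdd {α : Type*} {k l : ℕ} (h : k + 1 + l = k + l + 1) (x : α)
    (w : Fin (k + l) → α) :
    (Fin.cons x w : Fin (k + l + 1) → α) ∘ Fin.cast h ∘ Fin.castAdd l =
      Fin.cons x (w ∘ Fin.castAdd l) := by
  funext a
  refine Fin.cases rfl (fun a => ?_) a
  exact Fin.cons_succ (α := fun _ => α) x w (Fin.castAdd l a)

lemma cons_comp_cast_natAdd {α : Type*} {k l : ℕ} (h : k + 1 + l = k + l + 1) (x : α)
    (w : Fin (k + l) → α) :
    (Fin.cons x w : Fin (k + l + 1) → α) ∘ Fin.cast h ∘ Fin.natAdd (k + 1) = w ∘ Fin.natAdd k := by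
  funext j
  have : Fin.cast h (Fin.natAdd (k + 1) j) = (Fin.natAdd k j).succ := Fin.ext (by simp; omega)
  simp [this]

lemma cons_comp_cast {α : Type*} {m m' : ℕ} (e : m' = m) (x : α) (w : Fin m → α) :
    (Fin.cons x w : Fin (m + 1) → α) ∘ Fin.cast (congrArg (· + 1) e) =
      Fin.cons x (w ∘ Fin.cast e) := by
  subst e
  rfl

end Fin

lemma cons_comp_decomposeFin_symm_inv {α : Type*} {N : ℕ} (x : α) (w : Fin N → α)
    (p : Fin (N + 1)) (θ : Perm (Fin N)) :
    Fin.cons x w ∘ ⇑(decomposeFin.symm (p, θ))⁻¹ = Fin.cons x (w ∘ ⇑θ⁻¹) ∘ ⇑(swap 0 p) := by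
  funext t
  obtain ⟨s, rfl⟩ := (decomposeFin.symm (p, θ)).surjective t
  simp only [Function.comp_apply, Perm.coe_inv, symm_apply_apply]
  refine Fin.cases ?_ (fun r => ?_) s
  · simp [decomposeFin_symm_apply_zero]
  · simp [decomposeFin_symm_apply_succ]

lemma sum_sign_smul_cons_comp {ι α M : Type*} [Fintype ι] [DecidableEq ι] [AddCommGroup M]
    {N : ℕ} (g : ι ≃ Fin (N + 1)) (x : α) (w : Fin N → α) (F : (ι → α) → M) :
    ∑ σ : Perm ι, sign σ • F (Fin.cons x w ∘ g ∘ σ) =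
      ∑ p : ι, ∑ θ : Perm (Fin N), (sign (swap (g.symm 0) p) * sign θ) •
        F (Fin.cons x (w ∘ θ) ∘ g ∘ swap (g.symm 0) p) := by
  -- `e (p, θ)` puts `x` into slot `p` and orders `w` by `θ`
  let e : ι × Perm (Fin N) ≃ Perm ι :=
    (prodCongr g (Equiv.inv _)).trans
      (decomposeFin.symm.trans ((Equiv.inv _).trans g.symm.permCongr))
  have he : ∀ p θ, e (p, θ) = g.symm.permCongr (decomposeFin.symm (g p, θ⁻¹))⁻¹ := fun _ _ => rfl
  rw [← e.sum_comp, Fintype.sum_prod_type]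
  refine sum_congr rfl fun p _ => sum_congr rfl fun θ _ => ?_
  have hsign : sign (e (p, θ)) = sign (swap (g.symm 0) p) * sign θ := by
    have hp : g.symm 0 = p ↔ g p = 0 := by rw [Equiv.symm_apply_eq, eq_comm]
    rw [he, sign_permCongr, sign_inv, decomposeFin.symm_sign, sign_inv, sign_swap']
    simp only [hp, ite_mul, one_mul]
  have harg : Fin.cons x w ∘ g ∘ e (p, θ) = Fin.cons x (w ∘ θ) ∘ g ∘ swap (g.symm 0) p := by
    have hswap : ⇑(swap 0 (g p)) ∘ g = g ∘ swap (g.symm 0) p := by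
      simpa using g.injective.swap_comp (g.symm 0) p
    calc Fin.cons x w ∘ g ∘ e (p, θ) = Fin.cons x w ∘ ⇑(decomposeFin.symm (g p, θ⁻¹))⁻¹ ∘ g := by
          funext t; simp [he, permCongr_apply]
      _ = Fin.cons x (w ∘ θ) ∘ g ∘ swap (g.symm 0) p := by
          rw [← Function.comp_assoc, cons_comp_decomposeFin_symm_inv, inv_inv,
            Function.comp_assoc, hswap]
  rw [hsign, harg]

lemma cons_comp_swap_eq_update {ι α : Type*} [DecidableEq ι] {N : ℕ} (g : ι ≃ Fin (N + 1))
    (x x₀ : α) (w : Fin N → α) (p : ι) :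
    Fin.cons x w ∘ g ∘ swap (g.symm 0) p =
      Function.update (Fin.cons x₀ w ∘ g ∘ swap (g.symm 0) p) p x := by
  have hp : ((swap (g.symm 0) p).trans g).symm 0 = p := by simp
  have := Function.update_comp_equiv (Fin.cons x₀ w : Fin (N + 1) → α)
    ((swap (g.symm 0) p).trans g) 0 x
  rwa [Fin.update_cons_zero, hp] at this

lemma val_finRotate_pow (n j : ℕ) (x : Fin n) : ((finRotate n ^ j) x : ℕ) = (x + j) % n := by
  induction j generalizing x with
  | zero => simp [Nat.mod_eq_of_lt x.isLt]
  | succ j ih =>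
    have : NeZero n := x.neZero
    rw [pow_succ, Perm.mul_apply, ih, finRotate_apply, Fin.val_add, Nat.mod_add_mod, Fin.val_one',
      add_right_comm, Nat.add_mod_mod, add_assoc]

lemma finAddFlip_trans_finCongr_eq_finRotate_pow (m n : ℕ) :
    finAddFlip.trans (finCongr (Nat.add_comm n m)) = finRotate (m + n) ^ n := by
  ext ⟨x, hx⟩
  rw [val_finRotate_pow, trans_apply, finCongr_apply, Fin.val_cast, Fin.val_mk]
  by_cases h : x < m
  · rw [finAddFlip_apply_mk_left h, Nat.mod_eq_of_lt (by simp; omega), Fin.val_mk, add_comm]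
  · rw [finAddFlip_apply_mk_right (by omega) hx,
      show x + n = x - m + (m + n) by omega, Nat.add_mod_right, Nat.mod_eq_of_lt (by omega)]

lemma sign_finAddFlip_trans_finCongr (m n : ℕ) :
    sign (finAddFlip.trans (finCongr (Nat.add_comm n m)) : Perm (Fin (m + n))) =
      (-1) ^ (m * n) := by
  rw [finAddFlip_trans_finCongr_eq_finRotate_pow, map_pow, sign_finRotate, ← pow_mul]
  rcases n with _ | n
  · simp
  · rw [show (m + (n + 1) - 1) * (n + 1) = m * (n + 1) + n * (n + 1) by
      rw [show m + (n + 1) - 1 = m + n by omega]; ring,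
      pow_add, (Nat.even_mul_succ_self n).neg_one_pow, mul_one]

lemma sum_sign_smul_comp_perm {ι α M : Type*} [Fintype ι] [DecidableEq ι] [AddCommGroup M]
    (f : (ι → α) → M) (w : ι → α) (π : Perm ι) :
    ∑ θ : Perm ι, sign θ • f (w ∘ π ∘ θ) = sign π • ∑ θ : Perm ι, sign θ • f (w ∘ θ) := by
  rw [← Equiv.sum_comp (Equiv.mulLeft π⁻¹), smul_sum]
  refine sum_congr rfl fun θ _ => ?_
  simp [Perm.sign_mul, mul_smul, ← Function.comp_assoc]

section trace

variable {R M ι : Type*} [CommRing R] [AddCommGroup M] [Module R M] [Fintype ι] [DecidableEq ι]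

lemma Module.Basis.sum_coord_apply_eq_trace (b : Module.Basis ι R M) (f : M →ₗ[R] M) :
    ∑ i, b.coord i (f (b i)) = LinearMap.trace R M f := by
  simp [LinearMap.trace_eq_matrix_trace R b, Matrix.trace, LinearMap.toMatrix_apply]

lemma Module.Basis.sum_coord_comp_comm (b : Module.Basis ι R M) (f g : M →ₗ[R] M) :
    ∑ i, b.coord i (g (f (b i))) = ∑ i, b.coord i (f (g (b i))) := by
  have h := LinearMap.trace_mul_comm R g f
  rw [← b.sum_coord_apply_eq_trace, ← b.sum_coord_apply_eq_trace] at h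
  exact h

end trace

section alternating

variable {R M ι : Type*} [CommRing R] [AddCommGroup M] [Module R M] [Fintype ι]

lemma AlternatingMap.sum_coord_update_eq_zero {l : ℕ} (b : Module.Basis ι R M)
    (Q : M [⋀^Fin (l + 1)]→ₗ[R] M)
    (hQ : ∀ u : Fin l → M, ∑ i, b.coord i (Q (Fin.cons (b i) u)) = 0)
    (y : Fin (l + 1) → M) (s : Fin (l + 1)) :
    ∑ i, b.coord i (Q (Function.update y s (b i))) = 0 := by
  have hswap : ∀ x, Q (Function.update y s x) =
      sign (swap 0 s) • Q (Fin.cons x (Fin.tail (y ∘ swap 0 s))) := by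
    intro x
    have hy : Function.update y s x ∘ swap 0 s = Fin.cons x (Fin.tail (y ∘ swap 0 s)) := by
      rw [Function.update_comp_equiv, symm_swap, swap_apply_right, ← Fin.update_cons_zero
        ((y ∘ swap 0 s) 0), Fin.cons_self_tail]
    rw [← hy, Q.map_perm, smul_smul, Int.units_mul_self, one_smul]
  simp only [hswap, LinearMap.map_smul_of_tower]
  rw [← Finset.smul_sum, hQ, smul_zero]

end alternating

section nijenhuisRichardson

variable {ι : Type*} [Fintype ι] (b : Module.Basis ι ℝ V) {k l : ℕ}
  (P : V [⋀^Fin (k + 1)]→ₗ[ℝ] V) (Q : V [⋀^Fin (l + 1)]→ₗ[ℝ] V)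

noncomputable def nrInsert (y : Fin (k + 1 + l) → V) : V :=
  Q (Fin.cons (P (y ∘ Fin.castAdd l)) (y ∘ Fin.natAdd (k + 1)))

lemma nrHook_eq_sum_nrInsert (v : Fin (k + 1 + l) → V) :
    nrHook P Q v = ((k + 1).factorial * l.factorial : ℝ)⁻¹ •
      ∑ σ : Perm (Fin (k + 1 + l)), sign σ • nrInsert P Q (v ∘ σ) :=
  rfl

lemma nrInsert_cons_comp_cast (h : k + 1 + l = k + l + 1) (x : V) (w : Fin (k + l) → V) :
    nrInsert P Q (Fin.cons x w ∘ Fin.cast h) =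
      Q (Fin.cons (P (Fin.cons x (w ∘ Fin.castAdd l))) (w ∘ Fin.natAdd k)) := by
  rw [nrInsert, Function.comp_assoc, Function.comp_assoc, Fin.cons_comp_cast_castAdd,
    Fin.cons_comp_cast_natAdd]

lemma nrInsert_comp_swap_castAdd (y : Fin (k + 1 + l) → V) (q r : Fin (k + 1)) :
    nrInsert P Q (y ∘ swap (Fin.castAdd l q) (Fin.castAdd l r)) =
      sign (swap (Fin.castAdd l q) (Fin.castAdd l r)) • nrInsert P Q y := by
  have hleft : y ∘ swap (Fin.castAdd l q) (Fin.castAdd l r) ∘ Fin.castAdd l =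
      (y ∘ Fin.castAdd l) ∘ swap q r := by
    rw [(Fin.castAdd_injective _ _).swap_comp]; rfl
  have hright : y ∘ swap (Fin.castAdd l q) (Fin.castAdd l r) ∘ Fin.natAdd (k + 1) =
      y ∘ Fin.natAdd (k + 1) := by
    funext j
    exact congrArg y (swap_apply_of_ne_of_ne (Fin.ne_of_val_ne (by simp; omega))
      (Fin.ne_of_val_ne (by simp; omega)))
  have hsign : sign (swap (Fin.castAdd l q) (Fin.castAdd l r)) = sign (swap q r) := by
    simp only [sign_swap', Fin.castAdd_inj]
  rw [nrInsert, nrInsert, Function.comp_assoc, Function.comp_assoc, hleft, hright, P.map_perm,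
    hsign, Units.smul_def, Units.smul_def, ← Int.cast_smul_eq_zsmul ℝ, ← Int.cast_smul_eq_zsmul ℝ]
  exact Q.toMultilinearMap.cons_smul _ _ _

lemma nrInsert_update_natAdd (y : Fin (k + 1 + l) → V) (j : Fin l) (x : V) :
    nrInsert P Q (Function.update y (Fin.natAdd (k + 1) j) x) =
      Q (Function.update (Fin.cons (P (y ∘ Fin.castAdd l)) (y ∘ Fin.natAdd (k + 1))) j.succ x) := by
  rw [nrInsert, ← Fin.cons_update,
    Function.update_comp_eq_of_injective _ (Fin.natAdd_injective _ _),
    Function.update_comp_eq_of_forall_ne]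
  exact fun a h => by have := congrArg Fin.val h; simp at this; omega


noncomputable def compPartialTrace (w : Fin (k + l) → V) : ℝ :=
  ∑ i, b.coord i (Q (Fin.cons (P (Fin.cons (b i) (w ∘ Fin.castAdd l))) (w ∘ Fin.natAdd k)))

lemma compPartialTrace_comm (w : Fin (k + l) → V) :
    compPartialTrace b P Q w = compPartialTrace b Q P (w ∘ finAddFlip) := by
  classical
  have hl : w ∘ finAddFlip ∘ Fin.castAdd k = w ∘ Fin.natAdd k := by
    funext j; simp
  have hr : w ∘ finAddFlip ∘ Fin.natAdd l = w ∘ Fin.castAdd l := by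
    funext j; simp
  simpa [compPartialTrace, Function.comp_assoc, hl, hr] using
    b.sum_coord_comp_comm (P.toMultilinearMap.toLinearMap (Fin.cons 0 (w ∘ Fin.castAdd l)) 0)
      (Q.toMultilinearMap.toLinearMap (Fin.cons 0 (w ∘ Fin.natAdd k)) 0)

lemma sum_coord_nrInsert_cons_swap_castAdd (h : k + 1 + l = k + l + 1) (w : Fin (k + l) → V)
    (q : Fin (k + 1)) :
    ∑ i, b.coord i (nrInsert P Q
        (Fin.cons (b i) w ∘ Fin.cast h ∘ swap (Fin.castAdd l 0) (Fin.castAdd l q))) =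
      sign (swap (Fin.castAdd l 0) (Fin.castAdd l q)) • compPartialTrace b P Q w := by
  have hswap : ∀ i, nrInsert P Q
      (Fin.cons (b i) w ∘ Fin.cast h ∘ swap (Fin.castAdd l 0) (Fin.castAdd l q)) =
        sign (swap (Fin.castAdd l 0) (Fin.castAdd l q)) •
          nrInsert P Q (Fin.cons (b i) w ∘ Fin.cast h) :=
    fun i => nrInsert_comp_swap_castAdd P Q (Fin.cons (b i) w ∘ Fin.cast h) 0 q
  simp only [hswap, LinearMap.map_smul_of_tower, ← smul_sum, nrInsert_cons_comp_cast]
  rfl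

lemma sum_coord_nrInsert_cons_swap_natAdd
    (hQ : ∀ u : Fin l → V, ∑ i, b.coord i (Q (Fin.cons (b i) u)) = 0)
    (h : k + 1 + l = k + l + 1) (w : Fin (k + l) → V) (j : Fin l) :
    ∑ i, b.coord i (nrInsert P Q
        (Fin.cons (b i) w ∘ Fin.cast h ∘ swap (Fin.castAdd l 0) (Fin.natAdd (k + 1) j))) = 0 := by
  have hupd : ∀ i, Fin.cons (b i) w ∘ Fin.cast h ∘ swap (Fin.castAdd l 0) (Fin.natAdd (k + 1) j) =
      Function.update (Fin.cons 0 w ∘ Fin.cast h ∘ swap (Fin.castAdd l 0) (Fin.natAdd (k + 1) j))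
        (Fin.natAdd (k + 1) j) (b i) :=
    fun i => cons_comp_swap_eq_update (finCongr h) (b i) 0 w _
  simp only [hupd, nrInsert_update_natAdd]
  exact AlternatingMap.sum_coord_update_eq_zero b Q hQ _ _

lemma sum_coord_nrHook_cons (hQ : ∀ u : Fin l → V, ∑ i, b.coord i (Q (Fin.cons (b i) u)) = 0)
    (h : k + 1 + l = k + l + 1) (u : Fin (k + l) → V) :
    ∑ i, b.coord i (nrHook P Q (Fin.cons (b i) u ∘ Fin.cast h)) =
      (k.factorial * l.factorial : ℝ)⁻¹ *
        ∑ θ : Perm (Fin (k + l)), sign θ • compPartialTrace b P Q (u ∘ θ) := by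
  have hexpand : ∀ i, b.coord i (nrHook P Q (Fin.cons (b i) u ∘ Fin.cast h)) =
      ((k + 1).factorial * l.factorial : ℝ)⁻¹ * ∑ p, ∑ θ : Perm (Fin (k + l)),
        (sign (swap (Fin.castAdd l 0) p) * sign θ) •
          b.coord i (nrInsert P Q
            (Fin.cons (b i) (u ∘ θ) ∘ Fin.cast h ∘ swap (Fin.castAdd l 0) p)) := by
    intro i
    rw [nrHook_eq_sum_nrInsert, map_smul, map_sum, smul_eq_mul]
    simp only [LinearMap.map_smul_of_tower]
    exact congrArg _
      (sum_sign_smul_cons_comp (finCongr h) (b i) u fun y => b.coord i (nrInsert P Q y))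
  rw [sum_congr rfl fun i _ => hexpand i, ← mul_sum, sum_comm,
    sum_congr rfl fun p _ => sum_comm, Fin.sum_univ_add]
  simp only [← smul_sum, sum_coord_nrInsert_cons_swap_castAdd,
    sum_coord_nrInsert_cons_swap_natAdd b P Q hQ,
    smul_zero, sum_const_zero, add_zero, smul_smul, mul_right_comm _ (sign _), Int.units_mul_self,
    one_mul, sum_const, card_univ, Fintype.card_fin]
  rw [nsmul_eq_mul, ← mul_assoc, Nat.factorial_succ]
  push_cast
  field_simp

lemma sum_sign_smul_compPartialTrace_flip (hlk : l + k = k + l) (u : Fin (k + l) → V) :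
    ∑ θ : Perm (Fin (l + k)), sign θ • compPartialTrace b Q P ((u ∘ Fin.cast hlk) ∘ θ) =
      (-1 : ℤˣ) ^ (k * l) • ∑ θ : Perm (Fin (k + l)), sign θ • compPartialTrace b P Q (u ∘ θ) := by
  set π : Perm (Fin (l + k)) := finAddFlip.trans (finCongr (Nat.add_comm k l))
  have hflip :
      ∑ θ : Perm (Fin (l + k)), sign θ • compPartialTrace b Q P ((u ∘ Fin.cast hlk) ∘ π ∘ θ) =
        ∑ θ : Perm (Fin (k + l)), sign θ • compPartialTrace b P Q (u ∘ θ) := by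
    rw [← Equiv.sum_comp (finAddFlip.symm.permCongr : Perm (Fin (k + l)) ≃ Perm (Fin (l + k)))]
    refine sum_congr rfl fun θ _ => ?_
    rw [sign_permCongr, compPartialTrace_comm b P Q (u ∘ θ)]
    congr 2
    funext t
    simp only [π, Function.comp_apply, permCongr_apply, symm_symm, trans_apply, finCongr_apply,
      apply_symm_apply, Fin.cast_cast, Fin.cast_eq_self]
  rw [sum_sign_smul_comp_perm, sign_finAddFlip_trans_finCongr, mul_comm l k] at hflip
  rw [← hflip, smul_smul, ← mul_pow, Int.units_mul_self, one_pow, one_smul]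

lemma sum_coord_nrBracket_cons (hP : ∀ u : Fin k → V, ∑ i, b.coord i (P (Fin.cons (b i) u)) = 0)
    (hQ : ∀ u : Fin l → V, ∑ i, b.coord i (Q (Fin.cons (b i) u)) = 0)
    (h : k + 1 + l = k + l + 1) (u : Fin (k + l) → V) :
    ∑ i, b.coord i (nrBracket P Q (Fin.cons (b i) u ∘ Fin.cast h)) = 0 := by
  have hlk : l + k = k + l := Nat.add_comm l k
  have hcast : ∀ x : V, (Fin.cons x u ∘ Fin.cast h) ∘ Fin.cast (by omega : l + 1 + k = k + 1 + l) =
      Fin.cons x (u ∘ Fin.cast hlk) ∘ Fin.cast (Nat.add_right_comm l 1 k) := by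
    intro x
    rw [← Fin.cons_comp_cast hlk]
    rfl
  have hbracket : ∀ x : V, nrBracket P Q (Fin.cons x u ∘ Fin.cast h) =
      nrHook P Q (Fin.cons x u ∘ Fin.cast h) - ((-1 : ℤ) ^ (k * l)) •
        nrHook Q P (Fin.cons x (u ∘ Fin.cast hlk) ∘ Fin.cast (Nat.add_right_comm l 1 k)) :=
    fun x => by rw [← hcast]; rfl
  simp only [hbracket, map_sub, map_zsmul, sum_sub_distrib, ← smul_sum]
  rw [sum_coord_nrHook_cons b P Q hQ, sum_coord_nrHook_cons b Q P hP,
    sum_sign_smul_compPartialTrace_flip b P Q hlk, mul_smul_comm, Units.smul_def, smul_smul]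
  push_cast
  rw [← mul_pow, neg_one_mul, neg_neg, one_pow, one_smul, mul_comm (l.factorial : ℝ), sub_self]

end nijenhuisRichardson

/-- the kernel of `φ₁ = tr : End(V) → ℝ` is `sl(V)`; traceless endomorphisms
are closed under the commutator; and, more generally, the Nijenhuis–Richardson bracket of
elements of `ker φ_{k₁}` and `ker φ_{k₂}` lies in `ker φ_{k₁+k₂−1}` (the kernel condition
for `ψ` of degree `k` being that all partial traces `Σᵢ eⁱ(ψ(eᵢ, u₁, …, u_{k−1}))`
vanish). -/
theorem trace_kernel_sl_and_nrBracket_ker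
    {n : ℕ} (b : Module.Basis (Fin n) ℝ V) :
    (∀ A : Module.End ℝ V,
      LinearMap.trace ℝ V A = 0 ↔
        LinearMap.toMatrix b b A ∈ LieAlgebra.SpecialLinear.sl (Fin n) ℝ) ∧
    (∀ A B : Module.End ℝ V,
      LinearMap.trace ℝ V A = 0 → LinearMap.trace ℝ V B = 0 →
        LinearMap.trace ℝ V ⁅A, B⁆ = 0) ∧
    (∀ (k l : ℕ) (P : V [⋀^Fin (k + 1)]→ₗ[ℝ] V) (Q : V [⋀^Fin (l + 1)]→ₗ[ℝ] V),
      (∀ u : Fin k → V, ∑ i, b.coord i (P (Fin.cons (b i) u)) = 0) →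
      (∀ u : Fin l → V, ∑ i, b.coord i (Q (Fin.cons (b i) u)) = 0) →
      ∀ u : Fin (k + l) → V,
        ∑ i, b.coord i
          (nrBracket P Q (fun t => (Fin.cons (b i) u : Fin (k + l + 1) → V) (Fin.cast (show k + 1 + l = k + l + 1 by omega) t))) = 0) := by
  refine ⟨fun A => ?_, fun A B _ _ => ?_,
    fun k l P Q hP hQ u => sum_coord_nrBracket_cons b P Q hP hQ _ u⟩
  · rw [LinearMap.trace_eq_matrix_trace ℝ b]
    rfl
  · rw [Ring.lie_def, map_sub, LinearMap.trace_mul_comm, sub_self]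
end

section
/- Let (V,ω) be a symplectic vector space of dimension n, with dual bases {e_i} of V and {e^i} of V*. For p ≥ 2, the map φ_p^ω: Λ^p V* ⊗ V → Λ^{p−1}V* ⊗ Λ²V* defined by φ_p^ω(α⊗X) = (−1)^{p−1} Σ_i ι_{e_i}(α) ⊗ e^i ∧ ι_X ω is injective; for p = 2 it is an isomorphism. -/
/-! Fix the first `p - 2` arguments `u` of `ψ`. The form `S(a, b, c) = ω(ψ(u, a, b), c)` is
antisymmetric in `(a, b)` because `ψ` is alternating, and symmetric in `(b, c)` by the hypothesis
and the skewness of `ω`. Composing these transpositions around `S₃` gives `S = -S`, so `S = 0`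
and nondegeneracy forces `ψ = 0`.

For `p = 2` one must solve `ω(ψ(v, x), y) - ω(ψ(v, y), x) = T(v, x, y)`. As in the Koszul formula
for the Levi-Civita connection, `½ (T(v, x, y) + T(x, y, v) - T(y, v, x))` is alternating in
`(v, x)` and solves it, and `ω` identifies `V` with `V*`, so it is of the form `ω(ψ(v, x), y)`. -/

theorem AlternatingMap.map_snoc_snoc_swap {R M N : Type*} [Semiring R] [AddCommMonoid M]
    [Module R M] [AddCommGroup N] [Module R N] {k : ℕ} (f : M [⋀^Fin (k + 2)]→ₗ[R] N)
    (u : Fin k → M) (a b : M) :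
    f (Fin.snoc (Fin.snoc u a) b) = -f (Fin.snoc (Fin.snoc u b) a) := by
  have hne : (Fin.last k).castSucc ≠ Fin.last (k + 1) := (Fin.castSucc_lt_last _).ne
  rw [← f.map_swap _ hne]
  congr 1
  ext i
  induction i using Fin.lastCases with
  | last => simp
  | cast i =>
    induction i using Fin.lastCases with
    | last => simp
    | cast i =>
      rw [Function.comp_apply, Equiv.swap_apply_of_ne_of_ne] <;> simp [Fin.ext_iff] <;> omega

theorem eq_zero_of_antisymm_of_symm {α R : Type*} [Ring R] [NoZeroDivisors R] [CharZero R]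
    (S : α → α → α → R) (h₁₂ : ∀ a b c, S a b c = -S b a c) (h₂₃ : ∀ a b c, S a b c = S a c b)
    (a b c : α) : S a b c = 0 := by
  rw [← CharZero.eq_neg_self_iff]
  calc S a b c = S a c b := h₂₃ a b c
    _ = -S c a b := h₁₂ a c b
    _ = -S c b a := by rw [h₂₃ c a b]
    _ = S b c a := by rw [h₁₂ c b a, neg_neg]
    _ = S b a c := h₂₃ b c a
    _ = -S a b c := h₁₂ b a c

theorem AlternatingMap.eq_zero_of_pairing_symm {R M N : Type*} [CommRing R] [NoZeroDivisors R]
    [CharZero R] [AddCommGroup M] [Module R M] [AddCommGroup N] [Module R N] {k : ℕ}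
    (ω : N →ₗ[R] M →ₗ[R] R) (hω : ω.SeparatingLeft) (ψ : M [⋀^Fin (k + 2)]→ₗ[R] N)
    (hψ : ∀ v x y, ω (ψ (Fin.snoc v x)) y = ω (ψ (Fin.snoc v y)) x) : ψ = 0 := by
  have hS (u : Fin k → M) (a b c : M) : ω (ψ (Fin.snoc (Fin.snoc u a) b)) c = 0 :=
    eq_zero_of_antisymm_of_symm (fun a b c ↦ ω (ψ (Fin.snoc (Fin.snoc u a) b)) c)
      (fun a b c ↦ by simp only [ψ.map_snoc_snoc_swap u a b, map_neg, LinearMap.neg_apply])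
      (fun a b c ↦ hψ _ b c) a b c
  ext w
  rw [← Fin.snoc_init_self w, ← Fin.snoc_init_self (Fin.init w)]
  exact hω _ (hS _ _ _)

namespace LinearMap

section CommSemiring

variable {R M N : Type*} [CommSemiring R] [AddCommMonoid M] [Module R M] [AddCommMonoid N]
  [Module R N]

def IsAlt.toAlternatingMap {B : M →ₗ[R] M →ₗ[R] N} (hB : B.IsAlt) : M [⋀^Fin 2]→ₗ[R] N where
  toFun v := B (v 0) (v 1)
  map_update_add' v i x y := by
    fin_cases i <;> simp
  map_update_smul' v i c x := by
    fin_cases i <;> simp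
  map_eq_zero_of_eq' v i j hv hij := by
    have h01 : v 0 = v 1 := by fin_cases i <;> fin_cases j <;> simp_all
    change B (v 0) (v 1) = 0
    rw [h01]
    exact hB (v 1)

@[simp]
theorem IsAlt.toAlternatingMap_apply {B : M →ₗ[R] M →ₗ[R] N} (hB : B.IsAlt) (v : Fin 2 → M) :
    hB.toAlternatingMap v = B (v 0) (v 1) := rfl

end CommSemiring

section CommRing

variable {R M N : Type*} [CommRing R] [AddCommGroup M] [Module R M] [AddCommGroup N] [Module R N]

def koszul (T : M →ₗ[R] M →ₗ[R] M →ₗ[R] N) : M →ₗ[R] M →ₗ[R] M →ₗ[R] N :=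
  T + (lflip.comp T).flip - lflip.comp T.flip

@[simp]
theorem koszul_apply (T : M →ₗ[R] M →ₗ[R] M →ₗ[R] N) (v x y : M) :
    koszul T v x y = T v x y + T x y v - T y v x := rfl

theorem koszul_isAlt {T : M →ₗ[R] M →ₗ[R] M →ₗ[R] N} (hT : ∀ v, (T v).IsAlt) :
    (koszul T).IsAlt := by
  intro v
  ext y
  simp [hT y v, ← (hT v).neg v y]

theorem koszul_sub_koszul_swap {T : M →ₗ[R] M →ₗ[R] M →ₗ[R] N} (hT : ∀ v, (T v).IsAlt)
    (v x y : M) : koszul T v x y - koszul T v y x = (2 : R) • T v x y := by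
  simp only [koszul_apply, ← (hT v).neg x y, ← (hT x).neg y v, ← (hT y).neg x v]
  module

end CommRing

end LinearMap

theorem LinearMap.BilinForm.exists_alternatingMap_of_isAlt {K V : Type*} [Field K]
    [AddCommGroup V] [Module K V] [FiniteDimensional K V] {ω : LinearMap.BilinForm K V}
    (hω : ω.Nondegenerate) {D : V →ₗ[K] V →ₗ[K] Module.Dual K V} (hD : D.IsAlt) :
    ∃ ψ : V [⋀^Fin 2]→ₗ[K] V, ∀ v x, ω (ψ ![v, x]) = D v x :=
  ⟨(ω.toDual hω).symm.toLinearMap.compAlternatingMap hD.toAlternatingMap, fun v x ↦ by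
    ext y
    simp [← toDual_def hω]⟩

/-- for a symplectic vector space `(V,ω)` the map
`φ_p^ω : Λ^p V* ⊗ V → Λ^{p−1}V* ⊗ Λ²V*`, described invariantly on
`ψ ∈ Hom(Λ^p V, V)` by `φ_p^ω(ψ)(v₁,…,v_{p−1}) = ψ(v₁,…,v_{p−1},−)·ω`, is injective for
`p ≥ 2`, and for `p = 2` it is moreover an isomorphism (i.e. also surjective onto the
maps `V → Λ²V*`). -/
theorem phiOmega_injective_and_two_bijective
    {V : Type*} [AddCommGroup V] [Module ℝ V] [FiniteDimensional ℝ V]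
    (ω : V →ₗ[ℝ] V →ₗ[ℝ] ℝ)
    (hskew : ∀ x y : V, ω x y = -ω y x)
    (hnondeg : ∀ x : V, (∀ y : V, ω x y = 0) → x = 0) :
    (∀ (k : ℕ) (ψ : V [⋀^Fin (k + 2)]→ₗ[ℝ] V),
      (∀ (v : Fin (k + 1) → V) (x y : V),
        ω (ψ (Fin.snoc v x)) y + ω x (ψ (Fin.snoc v y)) = 0) → ψ = 0) ∧
    (∀ T : V →ₗ[ℝ] V →ₗ[ℝ] V →ₗ[ℝ] ℝ,
      (∀ v x y : V, T v x y = -T v y x) →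
      ∃ ψ : V [⋀^Fin 2]→ₗ[ℝ] V,
        ∀ v x y : V, ω (ψ ![v, x]) y + ω x (ψ ![v, y]) = T v x y) := by
  refine ⟨fun k ψ hψ ↦ ψ.eq_zero_of_pairing_symm ω hnondeg fun v x y ↦ ?_, fun T hT ↦ ?_⟩
  · linarith [hψ v x y, hskew x (ψ (Fin.snoc v y))]
  have hTalt (v : V) : (T v).IsAlt := fun x ↦ CharZero.eq_neg_self_iff.mp (hT v x x)
  have hω : ω.Nondegenerate := (LinearMap.IsRefl.nondegenerate_iff_separatingLeft
    fun x y h ↦ by rw [hskew, h, neg_zero]).mpr hnondeg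
  obtain ⟨ψ, hψ⟩ := LinearMap.BilinForm.exists_alternatingMap_of_isAlt hω
    (D := (2⁻¹ : ℝ) • LinearMap.koszul T) fun v ↦ by simp [LinearMap.koszul_isAlt hTalt v]
  refine ⟨ψ, fun v x y ↦ ?_⟩
  rw [hskew x, hψ, hψ]
  have hK := LinearMap.koszul_sub_koszul_swap hTalt v x y
  simp only [LinearMap.smul_apply, smul_eq_mul] at hK ⊢
  linarith
end

section
/- Let V be a finite-dimensional real vector space and F a linear singular foliation on V with the origin p a leaf. The linearization map lin: F → F sending a vector field X to its linear part X^{(1)} descends to an injective Lie algebra homomorphism F/I_pF → F. -/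
open scoped BigOperators

variable {V : Type*} [NormedAddCommGroup V] [NormedSpace ℝ V] [FiniteDimensional ℝ V]

/-- The linear part `X^{(1)}` of a vector field `X` on `V` at the origin. -/
noncomputable def linPart (X : V → V) : V → V := fun x => fderiv ℝ X 0 x

/-- The Lie bracket of vector fields on the vector space `V`. -/
noncomputable def vfBracket (X Y : V → V) : V → V :=
  fun x => fderiv ℝ Y x (X x) - fderiv ℝ X x (Y x)

/-- The product `I₀·F` of the ideal of functions vanishing at the origin with `F`. -/
def idealZeroMul (F : Set (V → V)) : Set (V → V) :=
  {Z | ∃ (m : ℕ) (g : Fin m → V → ℝ) (Y : Fin m → V → V),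
    (∀ i, ContDiff ℝ (⊤ : ℕ∞) (g i) ∧ g i 0 = 0 ∧ Y i ∈ F) ∧
    Z = fun x => ∑ i, g i x • Y i x}

set_option linter.unusedSectionVars false

lemma aux_lin_contDiff (T : V →ₗ[ℝ] V) : ContDiff ℝ (⊤ : ℕ∞) (⇑T) := by
  have := (LinearMap.toContinuousLinearMap T).contDiff (n := (⊤ : ℕ∞))
  simpa using this

lemma aux_lin_fderiv (T : V →ₗ[ℝ] V) (x : V) :
    fderiv ℝ (⇑T) x = LinearMap.toContinuousLinearMap T := by
  rw [← LinearMap.coe_toContinuousLinearMap' T]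
  exact ContinuousLinearMap.fderiv _

lemma aux_fderiv_sum_smul_lin {r : ℕ} (f : Fin r → V → ℝ) (hf : ∀ i, ContDiff ℝ (⊤ : ℕ∞) (f i))
    (T : Fin r → V →ₗ[ℝ] V) (v : V) :
    fderiv ℝ (fun x => ∑ i, f i x • T i x) 0 v = ∑ i, f i 0 • T i v := by
  have hd : ∀ i ∈ Finset.univ, DifferentiableAt ℝ (fun x => f i x • T i x) (0 : V) :=
    fun i _ => (((hf i).differentiable (by simp) 0)).smul
      ((aux_lin_contDiff (T i)).differentiable (by simp) 0)
  rw [fderiv_fun_sum hd, ContinuousLinearMap.sum_apply]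
  refine Finset.sum_congr rfl fun i _ => ?_
  rw [fderiv_fun_smul ((hf i).differentiable (by simp) 0)
    ((aux_lin_contDiff (T i)).differentiable (by simp) 0)]
  simp [aux_lin_fderiv]

lemma aux_fderiv_smul_vanish (g : V → ℝ) (Y : V → V) (hg : ContDiff ℝ (⊤ : ℕ∞) g)
    (hY : ContDiff ℝ (⊤ : ℕ∞) Y) (hg0 : g 0 = 0) (hY0 : Y 0 = 0) :
    fderiv ℝ (fun x => g x • Y x) 0 = 0 := by
  rw [fderiv_fun_smul (hg.differentiable (by simp) 0) (hY.differentiable (by simp) 0), hg0, hY0]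
  ext w; simp

lemma aux_fderiv_clm_part (X Y : V → V) (hX : ContDiff ℝ (⊤ : ℕ∞) X) (hY : ContDiff ℝ (⊤ : ℕ∞) Y)
    (hX0 : X 0 = 0) (v : V) :
    fderiv ℝ (fun x => fderiv ℝ Y x (X x)) 0 v = fderiv ℝ Y 0 (fderiv ℝ X 0 v) := by
  have hc : DifferentiableAt ℝ (fderiv ℝ Y) 0 :=
    ((hY.fderiv_right (m := 1) (by exact WithTop.coe_le_coe.mpr le_top)).differentiable one_ne_zero) 0
  rw [fderiv_clm_apply hc (hX.differentiable (by simp) 0)]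
  simp [hX0]

lemma aux_fderiv_linPart (Y : V → V) (v : V) :
    fderiv ℝ (linPart Y) v = fderiv ℝ Y 0 := by
  show fderiv ℝ (⇑(fderiv ℝ Y 0)) v = fderiv ℝ Y 0
  exact ContinuousLinearMap.fderiv _

/-- for a linear singular foliation `F` on `V` (a `C^∞(V)`-module of vector
fields generated by finitely many linear vector fields and closed under the Lie bracket),
the linearization map `X ↦ X^{(1)}` descends to an injective Lie algebra homomorphism
`F/I₀F → F`. -/
theorem linearization_descends_injective_lie_hom
    (F : Set (V → V))
    (hsmooth : ∀ X ∈ F, ContDiff ℝ (⊤ : ℕ∞) X)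
    (hmodule : ∀ (f : V → ℝ), ContDiff ℝ (⊤ : ℕ∞) f → ∀ X ∈ F, (fun x => f x • X x) ∈ F)
    (hadd : ∀ X ∈ F, ∀ Y ∈ F, (fun x => X x + Y x) ∈ F)
    (hbracket : ∀ X ∈ F, ∀ Y ∈ F, vfBracket X Y ∈ F)
    (hlin : ∃ (r : ℕ) (T : Fin r → (V →ₗ[ℝ] V)),
      F = {X | ∃ f : Fin r → V → ℝ,
        (∀ i, ContDiff ℝ (⊤ : ℕ∞) (f i)) ∧ X = fun x => ∑ i, f i x • T i x}) :
    (∀ X ∈ F, linPart X ∈ F) ∧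
    (∀ X ∈ idealZeroMul F, linPart X = 0) ∧
    (∀ X ∈ F, ∀ Y ∈ F, linPart (vfBracket X Y) = vfBracket (linPart X) (linPart Y)) ∧
    (∀ X ∈ F, linPart X = 0 → X ∈ idealZeroMul F) := by
  obtain ⟨r, T, hF⟩ := hlin
  -- every element of F vanishes at the origin
  have hzero : ∀ X ∈ F, X 0 = 0 := by
    intro X hX
    rw [hF] at hX
    obtain ⟨f, hf, rfl⟩ := hX
    simp
  -- the generators belong to F
  have hT : ∀ i, (⇑(T i) : V → V) ∈ F := by
    intro i
    rw [hF]
    refine ⟨fun j _ => if j = i then (1 : ℝ) else 0, fun j => contDiff_const, ?_⟩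
    funext x
    simp [ite_smul]
  -- linear part of an element of F
  have hlp : ∀ (f : Fin r → V → ℝ), (∀ i, ContDiff ℝ (⊤ : ℕ∞) (f i)) →
      linPart (fun x => ∑ i, f i x • T i x) = fun v => ∑ i, f i 0 • T i v := by
    intro f hf
    funext v
    exact aux_fderiv_sum_smul_lin f hf T v
  refine ⟨?_, ?_, ?_, ?_⟩
  · -- linPart preserves F
    intro X hX
    rw [hF] at hX ⊢
    obtain ⟨f, hf, rfl⟩ := hX
    exact ⟨fun i _ => f i 0, fun i => contDiff_const, hlp f hf⟩
  · -- linPart kills I₀·F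
    intro Z hZ
    obtain ⟨m, g, Y, h, rfl⟩ := hZ
    funext v
    show fderiv ℝ (fun x => ∑ i, g i x • Y i x) 0 v = 0
    have hd : ∀ i ∈ Finset.univ, DifferentiableAt ℝ (fun x => g i x • Y i x) (0 : V) :=
      fun i _ => ((h i).1.differentiable (by simp) 0).smul
        ((hsmooth (Y i) (h i).2.2).differentiable (by simp) 0)
    rw [fderiv_fun_sum hd]
    have : ∀ i ∈ Finset.univ, fderiv ℝ (fun x => g i x • Y i x) (0 : V) = 0 :=
      fun i _ => aux_fderiv_smul_vanish (g i) (Y i) (h i).1 (hsmooth (Y i) (h i).2.2)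
        (h i).2.1 (hzero (Y i) (h i).2.2)
    rw [Finset.sum_congr rfl this]
    simp
  · -- linPart is a Lie algebra morphism
    intro X hX Y hY
    have hXs := hsmooth X hX
    have hYs := hsmooth Y hY
    have hX0 := hzero X hX
    have hY0 := hzero Y hY
    have hdc : ∀ (Z : V → V), ContDiff ℝ (⊤ : ℕ∞) Z → DifferentiableAt ℝ (fderiv ℝ Z) 0 :=
      fun Z hZ => ((hZ.fderiv_right (m := 1) (by exact WithTop.coe_le_coe.mpr le_top)).differentiable one_ne_zero) 0
    have hdA : DifferentiableAt ℝ (fun x => fderiv ℝ Y x (X x)) 0 :=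
      (hdc Y hYs).clm_apply (hXs.differentiable (by simp) 0)
    have hdB : DifferentiableAt ℝ (fun x => fderiv ℝ X x (Y x)) 0 :=
      (hdc X hXs).clm_apply (hYs.differentiable (by simp) 0)
    funext v
    show fderiv ℝ (vfBracket X Y) 0 v
        = fderiv ℝ (linPart Y) v (linPart X v) - fderiv ℝ (linPart X) v (linPart Y v)
    have : fderiv ℝ (vfBracket X Y) 0
        = fderiv ℝ (fun x => fderiv ℝ Y x (X x)) 0 - fderiv ℝ (fun x => fderiv ℝ X x (Y x)) 0 := by
      unfold vfBracket
      exact fderiv_sub hdA hdB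
    rw [this, ContinuousLinearMap.sub_apply,
      aux_fderiv_clm_part X Y hXs hYs hX0 v, aux_fderiv_clm_part Y X hYs hXs hY0 v,
      aux_fderiv_linPart X v, aux_fderiv_linPart Y v]
    rfl
  · -- kernel of linPart is I₀·F
    intro X hX h0
    rw [hF] at hX
    obtain ⟨f, hf, rfl⟩ := hX
    have hsum0 : ∀ v : V, ∑ i, f i 0 • T i v = 0 := by
      intro v
      have h1 := (hlp f hf).symm.trans h0
      simpa using congrFun h1 v
    refine ⟨r, fun i x => f i x - f i 0, fun i => ⇑(T i),
      fun i => ⟨(hf i).sub contDiff_const, sub_self _, hT i⟩, ?_⟩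
    funext x
    simp only [sub_smul, Finset.sum_sub_distrib, hsum0 x, sub_zero]
end

section
/- Let V = ℝ² and let F be the C^∞(ℝ²)-module of vector fields generated by x∂_x and y∂_x. Then the isotropy Lie algebra F/I₀F at the origin is 2-dimensional and isomorphic to the non-abelian 2-dimensional Lie algebra. -/
open scoped BigOperators

/-- The Lie bracket of vector fields on `ℝ²`. -/
noncomputable def vfBracket2 (X Y : ℝ × ℝ → ℝ × ℝ) : ℝ × ℝ → ℝ × ℝ :=
  fun p => fderiv ℝ Y p (X p) - fderiv ℝ X p (Y p)

/-- The foliation `F = ⟨x∂ₓ, y∂ₓ⟩` on `ℝ²`. -/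
def folF : Set (ℝ × ℝ → ℝ × ℝ) :=
  {Z | ∃ f g : ℝ × ℝ → ℝ, ContDiff ℝ (⊤ : ℕ∞) f ∧ ContDiff ℝ (⊤ : ℕ∞) g ∧
    Z = fun p => f p • ((p.1, (0 : ℝ)) : ℝ × ℝ) + g p • ((p.2, (0 : ℝ)) : ℝ × ℝ)}

/-- The submodule `I₀·F`. -/
def idealZeroMulF : Set (ℝ × ℝ → ℝ × ℝ) :=
  {Z | ∃ (m : ℕ) (g : Fin m → ℝ × ℝ → ℝ) (Y : Fin m → ℝ × ℝ → ℝ × ℝ),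
    (∀ i, ContDiff ℝ (⊤ : ℕ∞) (g i) ∧ g i 0 = 0 ∧ Y i ∈ folF) ∧
    Z = fun p => ∑ i, g i p • Y i p}

/-- `x∂ₓ` as a continuous linear map. -/
noncomputable def L1 : ℝ × ℝ →L[ℝ] ℝ × ℝ := (ContinuousLinearMap.fst ℝ ℝ ℝ).prod 0

/-- `y∂ₓ` as a continuous linear map. -/
noncomputable def L2 : ℝ × ℝ →L[ℝ] ℝ × ℝ := (ContinuousLinearMap.snd ℝ ℝ ℝ).prod 0

lemma L1_apply (p : ℝ × ℝ) : L1 p = (p.1, (0:ℝ)) := rfl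
lemma L2_apply (p : ℝ × ℝ) : L2 p = (p.2, (0:ℝ)) := rfl

lemma folF_differentiable {Z : ℝ × ℝ → ℝ × ℝ} (hZ : Z ∈ folF) :
    Differentiable ℝ Z := by
  obtain ⟨f, g, hf, hg, rfl⟩ := hZ
  exact ((hf.differentiable (by simp)).smul (L1.differentiable)).add
    ((hg.differentiable (by simp)).smul (L2.differentiable))

lemma folF_zero {Z : ℝ × ℝ → ℝ × ℝ} (hZ : Z ∈ folF) : Z 0 = 0 := by
  obtain ⟨f, g, hf, hg, rfl⟩ := hZ
  simp [Prod.ext_iff]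

/-- Key lemma: any element of `I₀·F` has vanishing derivative at the origin. -/
lemma ideal_fderiv_zero {Z : ℝ × ℝ → ℝ × ℝ} (hZ : Z ∈ idealZeroMulF) :
    fderiv ℝ Z 0 = 0 := by
  obtain ⟨m, g, Y, h, rfl⟩ := hZ
  have hterm : ∀ i : Fin m, DifferentiableAt ℝ (fun p => g i p • Y i p) 0 := fun i =>
    (((h i).1.differentiable (by simp)) 0).smul ((folF_differentiable (h i).2.2) 0)
  rw [fderiv_fun_sum (fun i _ => hterm i)]
  apply Finset.sum_eq_zero
  intro i _
  rw [fderiv_fun_smul ((((h i).1.differentiable (by simp))) 0) ((folF_differentiable (h i).2.2) 0)]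
  simp [(h i).2.1, folF_zero (h i).2.2]

lemma X_mem : (⇑L1 : ℝ × ℝ → ℝ × ℝ) ∈ folF := by
  refine ⟨fun _ => 1, fun _ => 0, contDiff_const, contDiff_const, ?_⟩
  funext p
  simp [L1_apply]

lemma Y_mem : (⇑L2 : ℝ × ℝ → ℝ × ℝ) ∈ folF := by
  refine ⟨fun _ => 0, fun _ => 1, contDiff_const, contDiff_const, ?_⟩
  funext p
  simp [L2_apply]

/-- for the foliation `F = ⟨x∂ₓ, y∂ₓ⟩` on `ℝ²`, the isotropy Lie algebra
`F/I₀F` at the origin is 2-dimensional (there are two classes spanning it, independent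
modulo `I₀F`) and non-abelian, i.e. it is isomorphic to the non-abelian 2-dimensional Lie
algebra. -/
theorem isotropy_of_folF_two_dimensional_nonabelian :
    (∃ X Y : ℝ × ℝ → ℝ × ℝ, X ∈ folF ∧ Y ∈ folF ∧
      (∀ Z ∈ folF, ∃ a b : ℝ, (fun p => Z p - (a • X p + b • Y p)) ∈ idealZeroMulF) ∧
      (∀ a b : ℝ, (fun p => a • X p + b • Y p) ∈ idealZeroMulF → a = 0 ∧ b = 0)) ∧
    (∃ Z W, Z ∈ folF ∧ W ∈ folF ∧ vfBracket2 Z W ∉ idealZeroMulF) := by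
  constructor
  · refine ⟨⇑L1, ⇑L2, X_mem, Y_mem, ?_, ?_⟩
    · rintro Z ⟨f, g, hf, hg, rfl⟩
      refine ⟨f 0, g 0, 2, ![fun p => f p - f 0, fun p => g p - g 0], ![⇑L1, ⇑L2],
        ?_, ?_⟩
      · intro i
        fin_cases i
        · exact ⟨hf.sub contDiff_const, by simp, X_mem⟩
        · exact ⟨hg.sub contDiff_const, by simp, Y_mem⟩
      · funext p
        simp [Fin.sum_univ_two, L1_apply, L2_apply, sub_smul]
        abel
    · intro a b hab
      have hfun : (fun p => a • L1 p + b • L2 p) = ⇑(a • L1 + b • L2) := by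
        funext p; simp
      rw [hfun] at hab
      have h0 := ideal_fderiv_zero hab
      rw [ContinuousLinearMap.fderiv] at h0
      constructor
      · have := congrArg (fun (T : ℝ × ℝ →L[ℝ] ℝ × ℝ) => (T (1, 0)).1) h0
        simpa [L1_apply, L2_apply] using this
      · have := congrArg (fun (T : ℝ × ℝ →L[ℝ] ℝ × ℝ) => (T (0, 1)).1) h0
        simpa [L1_apply, L2_apply] using this
  · refine ⟨⇑L1, ⇑L2, X_mem, Y_mem, ?_⟩
    intro hmem
    have hbr : vfBracket2 (⇑L1) (⇑L2) = ⇑(-L2) := by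
      funext p
      simp only [vfBracket2, ContinuousLinearMap.fderiv]
      simp [L1_apply, L2_apply, Prod.ext_iff]
    rw [hbr] at hmem
    have h0 := ideal_fderiv_zero hmem
    rw [ContinuousLinearMap.fderiv] at h0
    have := congrArg (fun (T : ℝ × ℝ →L[ℝ] ℝ × ℝ) => (T (0, 1)).1) h0
    simp [L2_apply] at this
end
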